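/- arXiv:1110.5014 — 4 statements merged into one kernel-verified Lean document; each statement's English description precedes it below -/
import Mathlib

section
/- Define polynomials R_n(x) by R_1(x) = 1 and the recurrence R_{n+2}(x) = x(nx+2)·R_{n+1}(x) + x(1-x²)·R'_{n+1}(x). Then R_n(x) = Σ_{k=1}^{n-1} R(n,k)·x^k for all n ≥ 2, where R(n,k) is the number of permutations of [n] with k alternating runs. -/
/-!
`R_n` is the generating polynomial `∑_π x ^ altRuns π` of the permutations of `[n]`. Every
permutation of `[n+1]` arises exactly once by inserting the maximum `n+1` into one of the `n+1`
slots of a permutation `σ` of `[n]`. On the word of ascents and descents of `σ` this replaces one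
letter by "up, down", so the number of direction changes grows by 0, 1 or 2 according to the
neighbouring letters. If `σ` has `r` runs, exactly `r` slots give growth 0, two give 1 and
`n - 1 - r` give 2 (by induction on the word length, appending one letter at a time). So the
insertions into `σ` contribute `x^r (r + 2x + (n-1-r) x²) = x((n-1)x + 2) x^r + x(1 - x²) (x^r)'`,
which is the recurrence defining `R_n`.
-/

open Finset Polynomial

/-- `pval π i` is the value `π(i+1)` of the permutation in one-based value convention
(values `1,…,n`), and `0` for indices out of range. -/
def pval {n : ℕ} (π : Equiv.Perm (Fin n)) (i : ℕ) : ℕ :=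
  if h : i < n then (π ⟨i, h⟩ : ℕ) + 1 else 0

/-- number of positions where `π` changes direction -/
def dirChanges {n : ℕ} (π : Equiv.Perm (Fin n)) : ℕ :=
  ((Finset.Ioo 0 (n - 1)).filter (fun i =>
    (pval π (i-1) < pval π i ∧ pval π (i+1) < pval π i) ∨
    (pval π i < pval π (i-1) ∧ pval π i < pval π (i+1)))).card

/-- number of alternating runs of `π` (one more than the number of direction
changes; `0` by convention when `n ≤ 1`). -/
def altRuns {n : ℕ} (π : Equiv.Perm (Fin n)) : ℕ :=
  if n ≤ 1 then 0 else dirChanges π + 1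

/-- `R(n,k)`: the number of permutations of `[n]` with `k` alternating runs. -/
def runNum (n k : ℕ) : ℕ :=
  (Finset.univ.filter (fun π : Equiv.Perm (Fin n) => altRuns π = k)).card


open Equiv

-- A word of length `m` has the letters `b 1, …, b m`; `true` stands for an ascent.
def wordChanges (b : ℕ → Bool) (m : ℕ) : ℕ :=
  #{i ∈ Ioo 0 m | b i ≠ b (i + 1)}

/-- The ascent word after inserting a new maximum at slot `p`: the letter `b p` is replaced by
`true, false`; for `p = 0` only `false` is prepended, for `p = m + 1` only `true` appended. -/
def wordInsertPeak (b : ℕ → Bool) (p : ℕ) (i : ℕ) : Bool :=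
  if i < p then b i else if i = p then true else if i = p + 1 then false else b (i - 1)

def peakGain (b : ℕ → Bool) (m p : ℕ) : ℕ :=
  if p = 0 then (if b 1 then 1 else 0)
  else if p = m + 1 then (if b m then 0 else 1)
  else if b p then (if p = m then 1 else if b (p + 1) then 2 else 0)
  else (if p = 1 then 1 else if b (p - 1) then 0 else 2)

lemma wordChanges_congr {b c : ℕ → Bool} {m : ℕ} (h : ∀ i, 1 ≤ i → i ≤ m → b i = c i) :
    wordChanges b m = wordChanges c m := by
  unfold wordChanges
  congr 1
  refine filter_congr fun i hi => ?_
  rw [mem_Ioo] at hi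
  rw [h i (by omega) (by omega), h (i + 1) (by omega) (by omega)]

lemma wordChanges_succ (b : ℕ → Bool) {m : ℕ} (hm : 1 ≤ m) :
    wordChanges b (m + 1) = wordChanges b m + if b m ≠ b (m + 1) then 1 else 0 := by
  have : Ioo 0 (m + 1) = insert m (Ioo 0 m) := by
    ext
    simp only [mem_Ioo, Order.lt_add_one_iff, mem_insert]
    omega
  rw [wordChanges, wordChanges, this, filter_insert]
  split_ifs with h <;> simp [h]

lemma wordChanges_one (b : ℕ → Bool) : wordChanges b 1 = 0 := by
  simp only [wordChanges, card_eq_zero, filter_eq_empty_iff, mem_Ioo]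
  omega

section wordInsertPeak

variable (b : ℕ → Bool) {p i : ℕ}

lemma wordInsertPeak_of_lt (h : i < p) : wordInsertPeak b p i = b i := if_pos h

lemma wordInsertPeak_self : wordInsertPeak b p p = true := by simp [wordInsertPeak]

lemma wordInsertPeak_succ : wordInsertPeak b p (p + 1) = false := by simp [wordInsertPeak]

lemma wordInsertPeak_of_gt (h : p + 1 < i) : wordInsertPeak b p i = b (i - 1) := by
  simp only [wordInsertPeak]
  rw [if_neg (by omega), if_neg (by omega), if_neg (by omega)]

end wordInsertPeak

lemma peakGain_succ_of_lt (b : ℕ → Bool) {m p : ℕ} (hp : p < m) :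
    peakGain b (m + 1) p = peakGain b m p := by
  simp only [peakGain, show p ≠ m + 1 + 1 by omega, show p ≠ m + 1 by omega,
    show p ≠ m by omega, if_false]

lemma peakGain_add_wordInsertPeak_change (b : ℕ → Bool) {m p : ℕ} (hm : 1 ≤ m)
    (hp : p ≤ m + 1) :
    peakGain b m p
        + (if wordInsertPeak b p (m + 1) ≠ wordInsertPeak b p (m + 2) then 1 else 0)
      = (if b m ≠ b (m + 1) then 1 else 0) + peakGain b (m + 1) p := by
  obtain hpm | rfl | rfl : p < m ∨ m = p ∨ m + 1 = p := by omega
  · rw [peakGain_succ_of_lt b hpm, wordInsertPeak_of_gt b (by omega),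
      wordInsertPeak_of_gt b (by omega), add_comm]
    rfl
  · rw [wordInsertPeak_succ, wordInsertPeak_of_gt b (by omega)]
    simp only [peakGain, show m ≠ 0 by omega, show m ≠ m + 1 by omega,
      show m ≠ m + 1 + 1 by omega, show m + 2 - 1 = m + 1 by omega, if_false, if_true]
    cases b m <;> cases b (m + 1) <;> simp [add_comm]
  · rw [wordInsertPeak_self, wordInsertPeak_succ]
    simp only [peakGain, show m + 1 ≠ 0 by omega, show m + 1 ≠ m + 1 + 1 by omega,
      show m + 1 ≠ 1 by omega, if_false, if_true, add_tsub_cancel_right]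
    cases b m <;> cases b (m + 1) <;> simp

lemma wordChanges_wordInsertPeak (b : ℕ → Bool) {m p : ℕ} (hm : 1 ≤ m) (hp : p ≤ m + 1) :
    wordChanges (wordInsertPeak b p) (m + 1) = wordChanges b m + peakGain b m p := by
  induction m, hm using Nat.le_induction generalizing p with
  | base =>
    rw [wordChanges_succ _ le_rfl, wordChanges_one, wordChanges_one]
    interval_cases p <;> cases h : b 1 <;> simp [wordInsertPeak, peakGain, h]
  | succ m hm ih =>
    rw [wordChanges_succ (wordInsertPeak b p) (by omega)]
    rcases Nat.lt_or_ge p (m + 2) with hp' | hp'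
    · rw [ih (by omega), wordChanges_succ b hm, add_assoc,
        peakGain_add_wordInsertPeak_change b hm (by omega), add_assoc]
    · obtain rfl : p = m + 2 := by omega
      rw [wordChanges_congr fun i _ hi => wordInsertPeak_of_lt b (by omega : i < m + 2),
        wordInsertPeak_of_lt b (by omega), wordInsertPeak_self]
      simp only [peakGain, show m + 2 ≠ 0 by omega, if_false, if_true]
      cases b (m + 1) <;> simp

lemma sum_pow_peakGain {R : Type*} [CommRing R] (x : R) (b : ℕ → Bool) {m : ℕ} (hm : 1 ≤ m) :
    ∑ p ∈ range (m + 2), x ^ peakGain b m p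
      = (wordChanges b m + 1) + 2 * x + (m - 1 - wordChanges b m) * x ^ 2 := by
  induction m, hm using Nat.le_induction with
  | base =>
    rw [wordChanges_one]
    cases h : b 1 <;>
      simp only [sum_range_succ, range_one, sum_singleton, peakGain, h, Bool.false_eq_true,
        ↓reduceIte, one_ne_zero, OfNat.one_ne_ofNat, OfNat.ofNat_ne_zero, Nat.reduceAdd, pow_zero,
        pow_one, Nat.cast_zero, Nat.cast_one, sub_self, zero_mul, zero_add, add_zero] <;>
      ring
  | succ m hm ih =>
    have hlow : ∑ p ∈ range m, x ^ peakGain b (m + 1) p = ∑ p ∈ range m, x ^ peakGain b m p :=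
      sum_congr rfl fun p hp => by rw [peakGain_succ_of_lt b (mem_range.mp hp)]
    rw [sum_range_succ, sum_range_succ] at ih
    rw [show m + 1 + 2 = m + 2 + 1 by omega, sum_range_succ, sum_range_succ, sum_range_succ,
      hlow, wordChanges_succ b hm]
    generalize ∑ p ∈ range m, x ^ peakGain b m p = S at ih ⊢
    simp only [peakGain, show m ≠ 0 by omega, show m + 1 ≠ 0 by omega, show m + 2 ≠ 0 by omega,
      show m ≠ m + 1 by omega, show m ≠ m + 1 + 1 by omega, show m + 1 ≠ m + 1 + 1 by omega,
      show m + 2 = m + 1 + 1 by omega, show m + 1 ≠ 1 by omega, if_false, if_true,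
      add_tsub_cancel_right] at ih ⊢
    cases hbm : b m <;> cases b (m + 1) <;> simp only [hbm, Bool.false_eq_true, Bool.true_eq_false,
      ↓reduceIte, pow_ite, pow_one, pow_zero, ne_eq, not_true_eq_false, not_false_eq_true, add_zero,
      Nat.cast_add, Nat.cast_one, add_sub_cancel_right] at ih ⊢ <;>
      linear_combination ih

section insertMax

variable {n : ℕ} (σ : Perm (Fin n)) (p : Fin (n + 1))

def insertMax : Perm (Fin (n + 1)) :=
  (finSuccEquiv' p).trans (σ.optionCongr.trans (finSuccEquiv' (Fin.last n)).symm)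

lemma insertMax_apply_self : insertMax σ p p = Fin.last n := by
  simp [insertMax, finSuccEquiv'_at]

lemma insertMax_apply_succAbove (j : Fin n) :
    insertMax σ p (p.succAbove j) = (σ j).castSucc := by
  simp [insertMax]

lemma pval_insertMax_of_lt {i : ℕ} (h : i < p) : pval (insertMax σ p) i = pval σ i := by
  have hi : i < n := by omega
  have : (⟨i, by omega⟩ : Fin (n + 1)) = p.succAbove ⟨i, hi⟩ :=
    (Fin.succAbove_of_castSucc_lt p ⟨i, hi⟩ (Fin.lt_def.mpr h)).symm
  simp [pval, hi, show i < n + 1 by omega, this, insertMax_apply_succAbove]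

lemma pval_insertMax_self : pval (insertMax σ p) p = n + 1 := by
  simp [pval, insertMax_apply_self, p.isLt]

lemma pval_insertMax_of_gt {i : ℕ} (h : p < i) : pval (insertMax σ p) i = pval σ (i - 1) := by
  by_cases hi : i < n + 1
  · have : (⟨i, hi⟩ : Fin (n + 1)) = p.succAbove ⟨i - 1, by omega⟩ := by
      rw [Fin.succAbove_of_le_castSucc _ _ (by simp only [Fin.castSucc_mk, Fin.le_def]; omega)]
      ext
      simp only [Fin.succ_mk]
      omega
    simp [pval, hi, show i - 1 < n by omega, this, insertMax_apply_succAbove]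
  · simp [pval, hi, show ¬ i - 1 < n by omega]

end insertMax

lemma pval_le {n : ℕ} (σ : Perm (Fin n)) (i : ℕ) : pval σ i ≤ n := by
  unfold pval
  split_ifs
  · exact (σ _).isLt
  · omega

lemma eq_of_pval_eq {n : ℕ} (σ : Perm (Fin n)) {i j : ℕ} (hi : i < n) (hj : j < n)
    (h : pval σ i = pval σ j) : i = j := by
  simp only [pval, hi, hj, dif_pos, Nat.add_right_cancel_iff, Fin.val_inj,
    EmbeddingLike.apply_eq_iff_eq, Fin.mk.injEq] at h
  exact h

def ascentWord {n : ℕ} (σ : Perm (Fin n)) (i : ℕ) : Bool :=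
  decide (pval σ (i - 1) < pval σ i)

lemma dirChanges_eq_wordChanges {n : ℕ} (σ : Perm (Fin n)) :
    dirChanges σ = wordChanges (ascentWord σ) (n - 1) := by
  unfold dirChanges wordChanges
  congr 1
  refine filter_congr fun i hi => ?_
  rw [mem_Ioo] at hi
  have h₁ := eq_of_pval_eq σ (i := i - 1) (j := i) (by omega) (by omega)
  have h₂ := eq_of_pval_eq σ (i := i) (j := i + 1) (by omega) (by omega)
  simp only [ascentWord, add_tsub_cancel_right, ne_eq, decide_eq_decide]
  omega

lemma ascentWord_insertMax {n : ℕ} (σ : Perm (Fin n)) (p : Fin (n + 1)) {i : ℕ}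
    (hi : 1 ≤ i) : ascentWord (insertMax σ p) i = wordInsertPeak (ascentWord σ) p i := by
  have := pval_le σ (i - 1)
  obtain h | rfl | rfl | h : i < p ∨ i = p ∨ i = p + 1 ∨ p + 1 < i := by omega
  · rw [wordInsertPeak_of_lt _ h, ascentWord, ascentWord,
      pval_insertMax_of_lt σ p h, pval_insertMax_of_lt σ p (by omega)]
  · rw [wordInsertPeak_self, ascentWord, pval_insertMax_self,
      pval_insertMax_of_lt σ p (by omega)]
    simp only [decide_eq_true_eq]
    omega
  · have := pval_le σ p
    rw [wordInsertPeak_succ, ascentWord, add_tsub_cancel_right, pval_insertMax_self,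
      pval_insertMax_of_gt σ p (by omega)]
    simp only [decide_eq_false_iff_not, not_lt]
    omega
  · rw [wordInsertPeak_of_gt _ h, ascentWord, ascentWord,
      pval_insertMax_of_gt σ p (by omega), pval_insertMax_of_gt σ p (by omega)]

lemma altRuns_eq_dirChanges_add_one {n : ℕ} (hn : 2 ≤ n) (σ : Perm (Fin n)) :
    altRuns σ = dirChanges σ + 1 :=
  if_neg (by omega)

lemma altRuns_insertMax {n : ℕ} (hn : 2 ≤ n) (σ : Perm (Fin n)) (p : Fin (n + 1)) :
    altRuns (insertMax σ p) = altRuns σ + peakGain (ascentWord σ) (n - 1) p := by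
  have hw : wordChanges (ascentWord (insertMax σ p)) n
      = wordChanges (wordInsertPeak (ascentWord σ) p) n :=
    wordChanges_congr fun i hi _ => ascentWord_insertMax σ p hi
  rw [altRuns_eq_dirChanges_add_one hn, altRuns_eq_dirChanges_add_one (by omega), dirChanges_eq_wordChanges,
    dirChanges_eq_wordChanges, add_tsub_cancel_right, hw]
  obtain ⟨m, rfl⟩ : ∃ m, n = m + 1 := ⟨n - 1, by omega⟩
  rw [wordChanges_wordInsertPeak _ (by omega) (by omega), add_tsub_cancel_right]
  ring

lemma insertMax_bijective {n : ℕ} :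
    Function.Bijective fun x : Perm (Fin n) × Fin (n + 1) => insertMax x.1 x.2 := by
  rw [Fintype.bijective_iff_injective_and_card]
  refine ⟨fun ⟨σ, p⟩ ⟨τ, q⟩ h => ?_, ?_⟩
  · simp only at h
    obtain rfl : p = q := (insertMax τ q).injective <| by
      rw [insertMax_apply_self, ← insertMax_apply_self σ p, h]
    have hστ : σ = τ := Equiv.ext fun j => Fin.castSucc_injective _ <| by
      rw [← insertMax_apply_succAbove, ← insertMax_apply_succAbove, h]
    rw [hστ]
  · simp [Fintype.card_perm, Nat.factorial_succ, mul_comm]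

lemma sum_perm_succ_eq_sum_insertMax {M : Type*} [AddCommMonoid M] {n : ℕ} (f : Perm (Fin (n + 1)) → M) :
    ∑ π, f π = ∑ σ : Perm (Fin n), ∑ p, f (insertMax σ p) := by
  rw [← Fintype.sum_prod_type', insertMax_bijective.sum_comp f]

noncomputable def altRunsPoly (R : Type*) [CommRing R] (n : ℕ) : R[X] :=
  ∑ σ : Perm (Fin n), X ^ altRuns σ

lemma altRuns_mem_Icc {n : ℕ} (hn : 2 ≤ n) (σ : Perm (Fin n)) :
    altRuns σ ∈ Icc 1 (n - 1) := by
  have : dirChanges σ ≤ n - 2 := (card_filter_le _ _).trans (by simp only [Nat.card_Ioo]; omega)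
  rw [mem_Icc, altRuns_eq_dirChanges_add_one hn]
  omega

lemma sum_runNum_mul_X_pow (R : Type*) [CommRing R] {n : ℕ} (hn : 2 ≤ n) :
    ∑ k ∈ Icc 1 (n - 1), (runNum n k : R[X]) * X ^ k = altRunsPoly R n := by
  rw [altRunsPoly, ← sum_fiberwise_of_maps_to fun σ _ => altRuns_mem_Icc hn σ]
  refine sum_congr rfl fun k _ => ?_
  rw [runNum, ← nsmul_eq_mul, ← sum_const]
  exact sum_congr rfl fun σ hσ => by rw [(mem_filter.mp hσ).2]

lemma altRunsPoly_two (R : Type*) [CommRing R] : altRunsPoly R 2 = 2 * X := by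
  have h (σ : Perm (Fin 2)) : altRuns σ = 1 := by
    rw [altRuns_eq_dirChanges_add_one le_rfl, dirChanges_eq_wordChanges, wordChanges_one]
  simp [altRunsPoly, h, Fintype.card_perm]

lemma sum_X_pow_altRuns_insertMax (R : Type*) [CommRing R] {n : ℕ} (hn : 1 ≤ n)
    (σ : Perm (Fin (n + 1))) :
    ∑ p, (X : R[X]) ^ altRuns (insertMax σ p)
      = X * ((n : R[X]) * X + 2) * X ^ altRuns σ + X * (1 - X ^ 2) * derivative (X ^ altRuns σ) := by
  simp_rw [altRuns_insertMax (by omega : 2 ≤ n + 1), pow_add]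
  rw [← mul_sum, Fin.sum_univ_eq_sum_range (fun p => (X : R[X]) ^ peakGain _ _ p),
    add_tsub_cancel_right, sum_pow_peakGain _ _ hn, altRuns_eq_dirChanges_add_one (by omega),
    dirChanges_eq_wordChanges, add_tsub_cancel_right, derivative_X_pow, C_eq_natCast]
  push_cast
  ring

lemma altRunsPoly_succ_succ (R : Type*) [CommRing R] {n : ℕ} (hn : 1 ≤ n) :
    altRunsPoly R (n + 2) = X * ((n : R[X]) * X + 2) * altRunsPoly R (n + 1)
      + X * (1 - X ^ 2) * derivative (altRunsPoly R (n + 1)) := by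
  rw [altRunsPoly, sum_perm_succ_eq_sum_insertMax, altRunsPoly, derivative_sum, mul_sum, mul_sum, ← sum_add_distrib]
  exact sum_congr rfl fun σ _ => sum_X_pow_altRuns_insertMax R hn σ

/-- The polynomials defined by `R_1(x) = 1` and
`R_{n+2}(x) = x(nx+2) R_{n+1}(x) + x(1-x²) R'_{n+1}(x)` satisfy
`R_n(x) = ∑_{k=1}^{n-1} R(n,k) x^k` for `n ≥ 2`, where `R(n,k)` counts the
permutations of `[n]` with `k` alternating runs. -/
theorem stmt1 (R : ℕ → Polynomial ℝ) (hR1 : R 1 = 1)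
    (hRrec : ∀ n : ℕ, R (n+2) =
      X * ((n : Polynomial ℝ) * X + 2) * R (n+1) + X * (1 - X^2) * derivative (R (n+1))) :
    ∀ n, 2 ≤ n → R n = ∑ k ∈ Finset.Icc 1 (n-1), (runNum n k : Polynomial ℝ) * X^k := by
  have hpoly : ∀ n, 1 ≤ n → R (n + 1) = altRunsPoly ℝ (n + 1) := by
    intro n hn
    induction n, hn using Nat.le_induction with
    | base => rw [hRrec 0, hR1, altRunsPoly_two]; simp [mul_comm]
    | succ n hn ih => rw [hRrec n, ih, altRunsPoly_succ_succ ℝ hn]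
  intro n hn
  obtain ⟨n, rfl⟩ : ∃ m, n = m + 1 := ⟨n - 1, by omega⟩
  rw [hpoly n (by omega), sum_runNum_mul_X_pow ℝ hn]
end

section
/- Define T_n(x) by T_0(x) = 1, T_1(x) = x, T_{n+1}(x) = x(nx+1)·T_n(x) + x(1-x²)·T'_n(x), and W_n(x) by W_1(x) = 1, W_{n+1}(x) = (nx-x+2)·W_n(x) + 2x(1-x)·W'_n(x). Then for all n ≥ 1 and x ≠ -1: 2^{n-1}·T_n(x) = x·(1+x)^{n-1}·W_n(2x/(1+x)). -/
open Finset Polynomial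

/-!
Substituting `u = 2x/(1+x)` turns the recurrence for `W` into the recurrence for `T`: if
`2^m T = x (1+x)^m W(u)` holds on the open set `x ≠ -1`, it can be differentiated there, and the
recurrence for `T_{m+2}` (which involves `T_{m+1}` and `T'_{m+1}`) becomes, after the chain rule
with `du/dx = 2/(1+x)^2`, exactly `x (1+x)^{m+1}` times the recurrence for `W_{m+2}` at `u`.
-/

noncomputable def twistedEval (m : ℕ) (p : ℝ[X]) (x : ℝ) : ℝ :=
  x * (1 + x) ^ m * p.eval (2 * x / (1 + x))

noncomputable def tStep (n : ℕ) (p : ℝ[X]) : ℝ[X] :=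
  X * ((n : ℝ[X]) * X + 1) * p + X * (1 - X ^ 2) * derivative p

noncomputable def wStep (n : ℕ) (p : ℝ[X]) : ℝ[X] :=
  ((n : ℝ[X]) * X - X + 2) * p + 2 * X * (1 - X) * derivative p

section Derivatives

variable {x : ℝ}

theorem hasDerivAt_two_mul_div_one_add (hx : 1 + x ≠ 0) :
    HasDerivAt (fun z : ℝ => 2 * z / (1 + z)) (2 / (1 + x) ^ 2) x := by
  have h := ((hasDerivAt_id x).const_mul 2).div ((hasDerivAt_id x).const_add 1) hx
  refine h.congr_deriv ?_
  simp only [id_eq, mul_one]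
  ring

/-- The derivative of `(1+z)^m`, written with a division so that it is uniform in `m`. -/
theorem hasDerivAt_one_add_pow (m : ℕ) (hx : 1 + x ≠ 0) :
    HasDerivAt (fun z : ℝ => (1 + z) ^ m) (m * (1 + x) ^ m / (1 + x)) x := by
  have h := (hasDerivAt_pow m (1 + x)).comp x ((hasDerivAt_id x).const_add 1)
  refine h.congr_deriv ?_
  cases m with
  | zero => simp
  | succ k =>
    rw [Nat.add_sub_cancel, pow_succ]
    field_simp

theorem hasDerivAt_twistedEval (m : ℕ) (p : ℝ[X]) (hx : 1 + x ≠ 0) :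
    HasDerivAt (twistedEval m p)
      ((1 * (1 + x) ^ m + x * (m * (1 + x) ^ m / (1 + x))) * p.eval (2 * x / (1 + x))
        + x * (1 + x) ^ m * ((derivative p).eval (2 * x / (1 + x)) * (2 / (1 + x) ^ 2))) x :=
  ((hasDerivAt_id' x).mul (hasDerivAt_one_add_pow m hx)).mul
    ((p.hasDerivAt _).comp x (hasDerivAt_two_mul_div_one_add hx))

end Derivatives

theorem twistedEval_step {m : ℕ} {T W : ℝ[X]}
    (h : ∀ z : ℝ, z ≠ -1 → 2 ^ m * T.eval z = twistedEval m W z) (x : ℝ) (hx : x ≠ -1) :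
    2 ^ (m + 1) * (tStep (m + 1) T).eval x = twistedEval (m + 1) (wStep (m + 1) W) x := by
  have hx' : 1 + x ≠ 0 := fun h0 => hx (by linarith)
  have hderiv : 2 ^ m * (derivative T).eval x
      = (1 * (1 + x) ^ m + x * (m * (1 + x) ^ m / (1 + x))) * W.eval (2 * x / (1 + x))
        + x * (1 + x) ^ m * ((derivative W).eval (2 * x / (1 + x)) * (2 / (1 + x) ^ 2)) := by
    have hEq : (fun z => 2 ^ m * T.eval z) =ᶠ[nhds x] twistedEval m W :=
      Filter.eventually_of_mem (isOpen_ne.mem_nhds hx) h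
    exact ((T.hasDerivAt x).const_mul _).unique
      ((hasDerivAt_twistedEval m W hx').congr_of_eventuallyEq hEq)
  have hval := h x hx
  simp only [twistedEval, tStep, wStep, eval_add, eval_mul, eval_sub, eval_pow, eval_X,
    eval_one, eval_natCast, eval_ofNat] at hval ⊢
  calc 2 ^ (m + 1) * ((x * ((↑(m + 1) : ℝ) * x + 1)) * T.eval x
          + x * (1 - x ^ 2) * (derivative T).eval x)
      = 2 * x * ((↑(m + 1) : ℝ) * x + 1) * (2 ^ m * T.eval x)
          + 2 * x * (1 - x ^ 2) * (2 ^ m * (derivative T).eval x) := by ring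
    _ = _ := by
      rw [hval, hderiv]
      field_simp
      push_cast
      ring

theorem stmt10_general (T : ℕ → Polynomial ℝ) (hT1 : T 1 = X)
    (hTrec : ∀ n : ℕ, T (n+1) =
      X * ((n : Polynomial ℝ) * X + 1) * T n + X * (1 - X^2) * derivative (T n))
    (W : ℕ → Polynomial ℝ) (hW1 : W 1 = 1)
    (hWrec : ∀ n : ℕ, 1 ≤ n → W (n+1) =
      ((n : Polynomial ℝ) * X - X + 2) * W n + 2 * X * (1 - X) * derivative (W n)) :
    ∀ n : ℕ, 1 ≤ n → ∀ x : ℝ, x ≠ -1 →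
      2 ^ (n - 1) * (T n).eval x
        = x * (1 + x) ^ (n - 1) * (W n).eval (2 * x / (1 + x)) := by
  have shifted : ∀ m : ℕ, ∀ x : ℝ, x ≠ -1 →
      2 ^ m * (T (m + 1)).eval x = twistedEval m (W (m + 1)) x := by
    intro m
    induction m with
    | zero => intro x _; simp [twistedEval, hT1, hW1]
    | succ m ih =>
      rw [hTrec, hWrec _ (Nat.le_add_left 1 m)]
      exact twistedEval_step ih
  intro n hn x hx
  obtain ⟨m, rfl⟩ := Nat.exists_eq_add_of_le' hn
  simpa [twistedEval] using shifted m x hx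

/-- For `n ≥ 1` and `x ≠ -1`: `2^{n-1}·T_n(x) = x·(1+x)^{n-1}·W_n(2x/(1+x))`. -/
theorem stmt10 (T : ℕ → Polynomial ℝ) (hT0 : T 0 = 1) (hT1 : T 1 = X)
    (hTrec : ∀ n : ℕ, T (n+1) =
      X * ((n : Polynomial ℝ) * X + 1) * T n + X * (1 - X^2) * derivative (T n))
    (W : ℕ → Polynomial ℝ) (hW1 : W 1 = 1)
    (hWrec : ∀ n : ℕ, 1 ≤ n → W (n+1) =
      ((n : Polynomial ℝ) * X - X + 2) * W n + 2 * X * (1 - X) * derivative (W n)) :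
    ∀ n : ℕ, 1 ≤ n → ∀ x : ℝ, x ≠ -1 →
      2 ^ (n - 1) * (T n).eval x
        = x * (1 + x) ^ (n - 1) * (W n).eval (2 * x / (1 + x)) :=
  stmt10_general T hT1 hTrec W hW1 hWrec
end

section
/- Let D be the derivation on ℤ[x,y,z] with D(x) = xy, D(y) = yz, D(z) = y². Then for all n ≥ 1, D^n(x) = x·Σ_{k=1}^n a_k(n)·y^k·z^{n-k}, where a_k(n) satisfies a_k(n) = k·a_k(n-1) + a_{k-1}(n-1) + (n-k+1)·a_{k-2}(n-1) with a_0(0) = a_1(1) = 1 and a_k(0) = a_0(n) = 0 for n,k ≥ 1. -/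
open Finset Polynomial

/-! With `P_n(y, z) = ∑_{k=0}^n a_k(n) y^k z^(n-k)` one has `Dⁿ x = x·P_n`: since `D x = x y` this
amounts to `P_{n+1} = y·P_n + D(P_n)`, and `D(y^k z^m) = k y^k z^(m+1) + m y^(k+2) z^(m-1)`.
After shifting the index, the three resulting sums are the three terms of the recurrence for
`a_k(n+1)`. Summing from `k = 0` lets the induction start at `P_0 = a_0(0) = 1`. -/

/-- `a_k(n)` (written `arec n k`), defined by the recurrence
`a_k(n) = k·a_k(n-1) + a_{k-1}(n-1) + (n-k+1)·a_{k-2}(n-1)` with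
`a_0(0) = a_1(1) = 1` and `a_k(0) = a_0(n) = 0` for `n,k ≥ 1`
(terms with a negative index being zero). -/
def arec : ℕ → ℕ → ℕ
  | 0, 0 => 1
  | 0, _+1 => 0
  | _+1, 0 => 0
  | n+1, k+1 => (k+1) * arec n (k+1) + arec n k
      + (n + 1 - k) * (if 1 ≤ k then arec n (k-1) else 0)

theorem arec_eq_zero_of_lt : ∀ {n k : ℕ}, n < k → arec n k = 0
  | 0, _+1, _ => rfl
  | n+1, k+1, h => by
    simp only [arec, arec_eq_zero_of_lt (show n < k + 1 by omega),
      arec_eq_zero_of_lt (show n < k by omega), Nat.sub_eq_zero_of_le (show n + 1 ≤ k by omega)]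
    simp

theorem Finset.sum_range_succ_shift {M : Type*} [AddCommMonoid M] (g : ℕ → M) (m : ℕ)
    (h0 : g 0 = 0) (hm : g m = 0) : ∑ k ∈ range m, g (k + 1) = ∑ k ∈ range m, g k := by
  simpa [h0, hm] using (sum_range_succ' g m).symm.trans (sum_range_succ g m)

section

variable {A : Type*} [CommSemiring A]

def arecPoly (y z : A) (n : ℕ) : A :=
  ∑ k ∈ range (n + 1), (arec n k : A) * y ^ k * z ^ (n - k)

theorem arecPoly_succ (y z : A) (n : ℕ) :
    arecPoly y z (n + 1) = y * arecPoly y z n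
      + ∑ k ∈ range (n + 1), (k * arec n k : A) * y ^ k * z ^ (n + 1 - k)
      + ∑ k ∈ range (n + 1), ((n - k : ℕ) * arec n k : A) * y ^ (k + 2) * z ^ (n - k - 1) := by
  have h_diag : ∑ k ∈ range (n + 1), ((k + 1) * arec n (k + 1) : A) * y ^ (k + 1) * z ^ (n - k)
      = ∑ k ∈ range (n + 1), (k * arec n k : A) * y ^ k * z ^ (n + 1 - k) := by
    convert sum_range_succ_shift (fun k => (k * arec n k : A) * y ^ k * z ^ (n + 1 - k)) (n + 1)
      (by simp) (by simp [arec_eq_zero_of_lt]) using 2 with k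
    simp
  have h_up : ∑ k ∈ range (n + 1),
        ((n + 1 - k : ℕ) * (if 1 ≤ k then arec n (k - 1) else 0 : ℕ) : A)
          * y ^ (k + 1) * z ^ (n - k)
      = ∑ k ∈ range (n + 1), ((n - k : ℕ) * arec n k : A) * y ^ (k + 2) * z ^ (n - k - 1) := by
    convert (sum_range_succ_shift (fun k =>
        ((n + 1 - k : ℕ) * (if 1 ≤ k then arec n (k - 1) else 0 : ℕ) : A)
          * y ^ (k + 1) * z ^ (n - k))
        (n + 1) (by simp) (by simp)).symm using 2 with k
    simp only [Nat.add_sub_add_right]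
    simp [Nat.sub_add_eq]
  rw [arecPoly, sum_range_succ', ← h_diag, ← h_up, arecPoly, mul_sum, ← sum_add_distrib,
    ← sum_add_distrib]
  simp only [arec, Nat.add_sub_add_right]
  push_cast
  rw [zero_mul, zero_mul, add_zero]
  refine sum_congr rfl fun k _ => ?_
  ring

end

section

variable {R A : Type*} [CommSemiring R] [CommSemiring A] [Algebra R A]
  (D : Derivation R A A) {x y z : A}

theorem Derivation.apply_pow_mul_pow (hy : D y = y * z) (hz : D z = y ^ 2) (k m : ℕ) :
    D (y ^ k * z ^ m) = k * y ^ k * z ^ (m + 1) + m * y ^ (k + 2) * z ^ (m - 1) := by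
  have hyk : D (y ^ k) = k * y ^ k * z := by
    rcases k with _ | k
    · simp
    · rw [D.leibniz_pow, hy, Nat.add_sub_cancel]; simp only [nsmul_eq_mul, smul_eq_mul]; ring
  have hzm : D (z ^ m) = m * y ^ 2 * z ^ (m - 1) := by
    rw [D.leibniz_pow, hz]; simp only [nsmul_eq_mul, smul_eq_mul]; ring
  rw [D.leibniz, hyk, hzm, smul_eq_mul, smul_eq_mul]
  ring

theorem Derivation.apply_arecPoly (hy : D y = y * z) (hz : D z = y ^ 2) (n : ℕ) :
    D (arecPoly y z n)
      = ∑ k ∈ range (n + 1), (k * arec n k : A) * y ^ k * z ^ (n + 1 - k)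
        + ∑ k ∈ range (n + 1), ((n - k : ℕ) * arec n k : A) * y ^ (k + 2) * z ^ (n - k - 1) := by
  rw [arecPoly, map_sum, ← sum_add_distrib]
  refine sum_congr rfl fun k hk => ?_
  rw [mul_assoc, D.leibniz, D.apply_pow_mul_pow hy hz, D.map_natCast, smul_zero, add_zero,
    smul_eq_mul, show n - k + 1 = n + 1 - k by grind]
  ring

theorem Derivation.iterate_eq_mul_arecPoly (hx : D x = x * y) (hy : D y = y * z)
    (hz : D z = y ^ 2) (n : ℕ) : D^[n] x = x * arecPoly y z n := by
  induction n with
  | zero => simp [arecPoly, arec]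
  | succ n ih =>
    rw [Function.iterate_succ_apply', ih, D.leibniz, hx, D.apply_arecPoly hy hz, arecPoly_succ,
      smul_eq_mul, smul_eq_mul]
    ring

end

/-- For the grammar `G = {x → xy, y → yz, z → y²}` (here `x = X 0`, `y = X 1`, `z = X 2`):
`Dⁿ(x) = x·∑_{k=1}^n a_k(n) y^k z^{n-k}` for `n ≥ 1`. -/
theorem stmt15
    (D : Derivation ℤ (MvPolynomial (Fin 3) ℤ) (MvPolynomial (Fin 3) ℤ))
    (hx : D (MvPolynomial.X 0) = MvPolynomial.X 0 * MvPolynomial.X 1)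
    (hy : D (MvPolynomial.X 1) = MvPolynomial.X 1 * MvPolynomial.X 2)
    (hz : D (MvPolynomial.X 2) = MvPolynomial.X 1 ^ 2) :
    ∀ n : ℕ, 1 ≤ n →
      (⇑D)^[n] (MvPolynomial.X 0)
        = MvPolynomial.X 0 * ∑ k ∈ Finset.Icc 1 n,
            (arec n k : MvPolynomial (Fin 3) ℤ)
              * MvPolynomial.X 1 ^ k * MvPolynomial.X 2 ^ (n - k) := by
  intro n hn
  obtain ⟨n, rfl⟩ := Nat.exists_eq_add_of_le' hn
  rw [D.iterate_eq_mul_arecPoly hx hy hz, arecPoly, range_eq_Ico,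
    sum_eq_sum_Ico_succ_bot (by omega), Ico_add_one_right_eq_Icc]
  simp [arec]
end

section
/- Define T_n(x) by T_0(x) = 1, T_1(x) = x, T_{n+1}(x) = x(nx+1)·T_n(x) + x(1-x²)·T'_n(x), and W_n(x) by W_1(x) = 1 and W_{n+1}(x) = (nx-x+2)·W_n(x) + 2x(1-x)·W'_n(x). Then for all n ≥ 1: T_{n+1}(x) = T_n(x) + x²·Σ_{k=0}^{n-1} C(n,k)·T_k(x)·W_{n-k}(x²). -/
/-!
Write `D = X (1 - X²) d/dX` and `S_n = ∑_{k<n} C(n,k) T_k V_{n-k}` with `V_j = W_j(X²)`, so that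
`T_{k+1} = X(kX+1) T_k + D T_k` and `V_{j+1} = ((j-1)X² + 2) V_j + D V_j` for `j ≥ 1`.
By Pascal's rule and the Leibniz rule for `D`, `S_{m+1} = T_m + ((m-1)X² + X + 2) S_m + D S_m`,
the lone `T_m` coming from `V_1 = 1`. Consequently the defect `E_n = T_{n+1} - T_n - X² S_n` obeys
the recurrence of `T` itself, `E_{m+1} = X((m+1)X+1) E_m + D E_m`, and `E_1 = 0`.
-/

open Finset Polynomial

theorem Finset.sum_range_succ_choose_mul {R : Type*} [CommSemiring R] (f : ℕ → ℕ → R) (m : ℕ) :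
    ∑ k ∈ range (m + 1), ((m + 1).choose k : R) * f k (m + 1 - k) =
      f m 1 + ∑ k ∈ range m, (m.choose k : R) * (f (k + 1) (m - k) + f k (m - k + 1)) := by
  have hpascal : ∀ k ∈ range m, ((m + 1).choose (k + 1) : R) * f (k + 1) (m + 1 - (k + 1)) =
      (m.choose k : R) * f (k + 1) (m - k) +
        (m.choose (k + 1) : R) * f (k + 1) (m - (k + 1) + 1) := by
    intro k hk
    have : m - (k + 1) + 1 = m - k := by grind
    rw [Nat.choose_succ_succ, Nat.add_sub_add_right, this]
    push_cast
    ring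
  have hshift : ∑ k ∈ range (m + 1), (m.choose k : R) * f k (m - k + 1) =
      ∑ k ∈ range m, (m.choose (k + 1) : R) * f (k + 1) (m - (k + 1) + 1) + f 0 (m + 1) := by
    simp [sum_range_succ']
  have hlast : ∑ k ∈ range (m + 1), (m.choose k : R) * f k (m - k + 1) =
      ∑ k ∈ range m, (m.choose k : R) * f k (m - k + 1) + f m 1 := by
    simp [sum_range_succ]
  rw [sum_range_succ', sum_congr rfl hpascal, sum_add_distrib, add_assoc]
  simp only [Nat.choose_zero_right, Nat.cast_one, one_mul, Nat.sub_zero, ← hshift, hlast,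
    mul_add, sum_add_distrib]
  ring

section

variable {R : Type*} [CommRing R]

theorem comp_X_sq_succ {W : ℕ → R[X]} {j : ℕ}
    (hW : W (j + 1) = ((j : R[X]) * X - X + 2) * W j + 2 * X * (1 - X) * derivative (W j)) :
    (W (j + 1)).comp (X ^ 2) = ((j : R[X]) * X ^ 2 - X ^ 2 + 2) * (W j).comp (X ^ 2) +
      X * (1 - X ^ 2) * derivative ((W j).comp (X ^ 2)) := by
  rw [hW, derivative_comp, derivative_X_sq]
  simp only [add_comp, mul_comp, sub_comp, natCast_comp, X_comp, ofNat_comp, one_comp]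
  rw [C_ofNat]
  ring

theorem mul_add_mul_eq_of_recurrences {t t' v v' : R[X]} {k j : ℕ}
    (ht : t' = X * ((k : R[X]) * X + 1) * t + X * (1 - X ^ 2) * derivative t)
    (hv : v' = ((j : R[X]) * X ^ 2 - X ^ 2 + 2) * v + X * (1 - X ^ 2) * derivative v) :
    t * v' + t' * v = (((k + j : ℕ) : R[X]) * X ^ 2 - X ^ 2 + X + 2) * (t * v) +
      X * (1 - X ^ 2) * derivative (t * v) := by
  rw [ht, hv, derivative_mul]
  push_cast
  ring

/-- The binomial convolution without its `k = n` term, so that `V 0` never occurs. -/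
noncomputable def binomConv (T V : ℕ → R[X]) (n : ℕ) : R[X] :=
  ∑ k ∈ range n, (n.choose k : R[X]) * T k * V (n - k)

variable {T V : ℕ → R[X]}

theorem binomConv_succ
    (hT : ∀ k : ℕ, T (k + 1) = X * ((k : R[X]) * X + 1) * T k + X * (1 - X ^ 2) * derivative (T k))
    (hV : ∀ j : ℕ, 1 ≤ j →
      V (j + 1) = ((j : R[X]) * X ^ 2 - X ^ 2 + 2) * V j + X * (1 - X ^ 2) * derivative (V j))
    (hV1 : V 1 = 1) (m : ℕ) :
    binomConv T V (m + 1) = T m + ((m : R[X]) * X ^ 2 - X ^ 2 + X + 2) * binomConv T V m +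
      X * (1 - X ^ 2) * derivative (binomConv T V m) := by
  have hterm : ∀ k ∈ range m, T (k + 1) * V (m - k) + T k * V (m - k + 1) =
      ((m : R[X]) * X ^ 2 - X ^ 2 + X + 2) * (T k * V (m - k)) +
        X * (1 - X ^ 2) * derivative (T k * V (m - k)) := by
    intro k hk
    have hkm : k + (m - k) = m := by grind
    rw [add_comm, mul_add_mul_eq_of_recurrences (hT k) (hV (m - k) (by grind)), hkm]
  simp only [binomConv, mul_assoc ((_ : ℕ) : R[X])]
  rw [sum_range_succ_choose_mul (fun k j => T k * V j), hV1, mul_one,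
    sum_congr rfl fun k hk => congrArg _ (hterm k hk)]
  rw [add_assoc (T m), mul_sum, derivative_sum, mul_sum, ← sum_add_distrib]
  refine congrArg _ (sum_congr rfl fun k _ => ?_)
  rw [derivative_natCast_mul]
  ring

theorem sub_binomConv_succ
    (hT : ∀ k : ℕ, T (k + 1) = X * ((k : R[X]) * X + 1) * T k + X * (1 - X ^ 2) * derivative (T k))
    (hV : ∀ j : ℕ, 1 ≤ j →
      V (j + 1) = ((j : R[X]) * X ^ 2 - X ^ 2 + 2) * V j + X * (1 - X ^ 2) * derivative (V j))
    (hV1 : V 1 = 1) (m : ℕ) :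
    T (m + 2) - T (m + 1) - X ^ 2 * binomConv T V (m + 1) =
      X * (((m + 1 : ℕ) : R[X]) * X + 1) * (T (m + 1) - T m - X ^ 2 * binomConv T V m) +
        X * (1 - X ^ 2) * derivative (T (m + 1) - T m - X ^ 2 * binomConv T V m) := by
  have hT_succ := hT (m + 1)
  simp only [derivative_sub, derivative_mul, derivative_X_sq, C_ofNat]
  push_cast at hT_succ ⊢
  linear_combination hT_succ - hT m - X ^ 2 * binomConv_succ hT hV hV1 m

end

theorem stmt19_general (T : ℕ → Polynomial ℝ) (hT0 : T 0 = 1)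
    (hTrec : ∀ n : ℕ, T (n+1) =
      X * ((n : Polynomial ℝ) * X + 1) * T n + X * (1 - X^2) * derivative (T n))
    (W : ℕ → Polynomial ℝ) (hW1 : W 1 = 1)
    (hWrec : ∀ n : ℕ, 1 ≤ n → W (n+1) =
      ((n : Polynomial ℝ) * X - X + 2) * W n + 2 * X * (1 - X) * derivative (W n)) :
    ∀ n : ℕ, 1 ≤ n →
      T (n+1) = T n + X^2 * ∑ k ∈ Finset.range n,
        (n.choose k : Polynomial ℝ) * T k * (W (n-k)).comp (X^2) := by
  let V : ℕ → ℝ[X] := fun j => (W j).comp (X ^ 2)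
  have hV1 : V 1 = 1 := by simp [V, hW1]
  have hV (j : ℕ) (hj : 1 ≤ j) := comp_X_sq_succ (hWrec j hj)
  intro n hn
  suffices T (n + 1) - T n - X ^ 2 * binomConv T V n = 0 by
    rwa [sub_sub, sub_eq_zero] at this
  induction n, hn using Nat.le_induction with
  | base =>
    have hT1 : T 1 = X := by simp [hTrec 0, hT0]
    rw [binomConv, sum_range_one, Nat.choose_zero_right, Nat.sub_zero, hV1, hTrec 1, hT1, hT0]
    simp only [Nat.cast_one, derivative_X]
    ring
  | succ m _ ih => rw [sub_binomConv_succ hTrec hV hV1, ih]; simp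

/-- Convolution formula `T_{n+1}(x) = T_n(x) + x²∑_{k=0}^{n-1} C(n,k) T_k(x) W_{n-k}(x²)`
for `n ≥ 1`. -/
theorem stmt19 (T : ℕ → Polynomial ℝ) (hT0 : T 0 = 1) (hT1 : T 1 = X)
    (hTrec : ∀ n : ℕ, T (n+1) =
      X * ((n : Polynomial ℝ) * X + 1) * T n + X * (1 - X^2) * derivative (T n))
    (W : ℕ → Polynomial ℝ) (hW1 : W 1 = 1)
    (hWrec : ∀ n : ℕ, 1 ≤ n → W (n+1) =
      ((n : Polynomial ℝ) * X - X + 2) * W n + 2 * X * (1 - X) * derivative (W n)) :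
    ∀ n : ℕ, 1 ≤ n →
      T (n+1) = T n + X^2 * ∑ k ∈ Finset.range n,
        (n.choose k : Polynomial ℝ) * T k * (W (n-k)).comp (X^2) :=
  stmt19_general T hT0 hTrec W hW1 hWrec
end
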